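/- arXiv:2405.17499 — 8 statements merged into one kernel-verified Lean document; each statement's English description precedes it below -/
import Mathlib

section
/- The number of distinct subsequences x of the alternating sequence ACACAC... of length t (over a binary alphabet {A,C}) such that x is a subsequence of the length-t prefix but not of the length-(t-1) prefix equals the t-th Fibonacci number F(t), where F(1)=1, F(2)=2, and F(t)=F(t-1)+F(t-2). -/
open List Finset

/-- The `q`-bonacci numbers: `F_q(0)=1`, `F_q(t)=2^(t-1)` for `1 ≤ t ≤ q`,
and `F_q(t)` is the sum of the previous `q` terms for `t > q`. -/
def qbonacci (q : ℕ) : ℕ → ℕ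
  | 0 => 1
  | t + 1 =>
    if t + 1 ≤ q then 2 ^ t
    else ∑ i ∈ Finset.range q, qbonacci q (t - i)
  decreasing_by exact Nat.lt_succ_of_le (Nat.sub_le t i)

/-- The length-`t` word cycling through the alphabet `{0, 1, ..., q-1}`. -/
def cyc (q t : ℕ) : List ℕ := (List.range t).map (· % q)

/-- The alternating binary word `0,1,0,1,...` of length `t` (A=0, C=1). -/
def alt (t : ℕ) : List ℕ := (List.range t).map (· % 2)

/-- `tau q x` is the least `s` such that `x` is a subsequence of `cyc q s`. -/
noncomputable def tau (q : ℕ) (x : List ℕ) : ℕ := sInf {s | x <+ cyc q s}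

lemma alt_succ (t : ℕ) : alt (t + 1) = alt t ++ [t % 2] := by
  simp [alt, List.range_succ]

lemma alt_mono {s t : ℕ} (h : s ≤ t) : alt s <+ alt t := by
  have : alt s = (alt t).take s := by
    rw [alt, alt, ← List.map_take, List.take_range, Nat.min_eq_left h]
  rw [this]; exact List.take_sublist _ _

lemma concat_sublist_concat {x l : List ℕ} {a b : ℕ} :
    x ++ [a] <+ l ++ [b] ↔ x ++ [a] <+ l ∨ (a = b ∧ x <+ l) := by
  constructor
  · intro h
    rcases List.sublist_append_iff.mp h with ⟨l₁, l₂, heq, h1, h2⟩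
    rcases List.sublist_singleton.mp h2 with rfl | rfl
    · left; rw [List.append_nil] at heq; rwa [heq]
    · right
      obtain ⟨rfl, hab⟩ := List.append_inj' heq rfl
      exact ⟨List.singleton_injective hab ▸ rfl, h1⟩
  · rintro (h | ⟨rfl, h⟩)
    · exact h.trans (List.sublist_append_left _ _)
    · exact h.append (Sublist.refl _)

/-- If a concat is a sublist of `alt s` then `s` is positive and dropping the
last letter gives a sublist of `alt (s-1)`. -/
lemma concat_sublist_alt {y : List ℕ} {a s : ℕ} (h : y ++ [a] <+ alt s) :
    ∃ u, s = u + 1 ∧ y <+ alt u := by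
  induction s with
  | zero => simp [alt] at h
  | succ v ih =>
    rw [alt_succ] at h
    rcases concat_sublist_concat.mp h with h' | ⟨rfl, h'⟩
    · obtain ⟨u, rfl, hu⟩ := ih h'
      exact ⟨u + 1, rfl, hu.trans (alt_mono (Nat.le_succ u))⟩
    · exact ⟨v, rfl, h'⟩

lemma sublist_concat_alt {y : List ℕ} {a s : ℕ} (h : y <+ alt s) (ha : a < 2) :
    y ++ [a] <+ alt (s + 2) := by
  have : alt (s + 2) = alt s ++ [s % 2, (s + 1) % 2] := by
    rw [show s + 2 = (s + 1) + 1 from rfl, alt_succ, alt_succ, List.append_assoc]; rfl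
  rw [this]
  refine h.append ?_
  have h2 := Nat.mod_two_eq_zero_or_one s
  have h3 := Nat.mod_two_eq_zero_or_one (s + 1)
  have h4 : s % 2 ≠ (s + 1) % 2 := by omega
  interval_cases a <;> rcases h2 with h2 | h2 <;> simp_all <;> omega

def S (t : ℕ) : Set (List ℕ) := {x | x <+ alt t ∧ ∀ s < t, ¬ x <+ alt s}

lemma S_finite (t : ℕ) : (S t).Finite := by
  apply (alt t).sublists.toFinset.finite_toSet.subset
  intro x hx
  simp only [List.coe_toFinset, Set.mem_setOf_eq, List.mem_sublists]
  exact hx.1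

lemma S_zero : S 0 = {[]} := by
  ext x
  simp only [S, Set.mem_setOf_eq, Set.mem_singleton_iff]
  constructor
  · rintro ⟨h, -⟩; simpa [alt] using h
  · rintro rfl; exact ⟨by simp [alt], by omega⟩

lemma S_one : S 1 = {[0]} := by
  ext x
  simp only [S, Set.mem_setOf_eq, Set.mem_singleton_iff]
  constructor
  · rintro ⟨h, h2⟩
    have : alt 1 = [0] := rfl
    rw [this, List.sublist_singleton] at h
    rcases h with rfl | rfl
    · exact absurd (List.nil_sublist (alt 0)) (h2 0 one_pos)
    · rfl
  · rintro rfl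
    refine ⟨by rw [show alt 1 = [0] from rfl], ?_⟩
    intro s hs
    interval_cases s
    simp [alt]

lemma S_rec (t : ℕ) : S (t + 2) = (· ++ [(t + 1) % 2]) '' (S (t + 1) ∪ S t) := by
  ext x
  simp only [Set.mem_image, Set.mem_union]
  constructor
  · rintro ⟨h, hmin⟩
    -- x is nonempty
    rcases List.eq_nil_or_concat x with rfl | ⟨y, a, rfl⟩
    · exact absurd (List.nil_sublist (alt 0)) (hmin 0 (by omega))
    simp only [List.concat_eq_append] at h hmin ⊢
    have h' : y ++ [a] <+ alt (t + 1) ++ [(t + 1) % 2] := by rwa [← alt_succ]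
    rcases concat_sublist_concat.mp h' with h'' | ⟨rfl, hy⟩
    · exact absurd h'' (hmin (t + 1) (by omega))
    refine ⟨y, ?_, rfl⟩
    by_cases hy2 : y <+ alt t
    · right
      refine ⟨hy2, fun s hs hcon => ?_⟩
      have : y ++ [(t + 1) % 2] <+ alt (s + 2) :=
        sublist_concat_alt hcon (Nat.mod_lt _ (by norm_num))
      exact hmin (s + 2) (by omega) this
    · left
      refine ⟨hy, fun s hs hcon => ?_⟩
      exact hy2 (hcon.trans (alt_mono (by omega)))
  · rintro ⟨y, (⟨hy, hymin⟩ | ⟨hy, hymin⟩), rfl⟩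
    · constructor
      · rw [alt_succ]; exact hy.append (Sublist.refl _)
      · intro s hs hcon
        obtain ⟨u, rfl, hu⟩ := concat_sublist_alt hcon
        exact hymin u (by omega) hu
    · constructor
      · have : alt (t + 2) = alt t ++ [t % 2, (t + 1) % 2] := by
          rw [show t + 2 = (t + 1) + 1 from rfl, alt_succ, alt_succ, List.append_assoc]; rfl
        rw [this]
        refine hy.append ?_
        exact (List.sublist_cons_self _ _).trans (Sublist.refl _) |>.trans (Sublist.refl _)
      · intro s hs hcon
        -- first show ¬ x <+ alt (t+1)
        have key : ¬ (y ++ [(t + 1) % 2] <+ alt (t + 1)) := by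
          intro hc
          rw [alt_succ] at hc
          rcases concat_sublist_concat.mp hc with hc' | ⟨heq, -⟩
          · obtain ⟨u, hu, hu'⟩ := concat_sublist_alt hc'
            exact hymin u (by omega) hu'
          · omega
        exact key (hcon.trans (alt_mono (by omega)))

lemma S_card : ∀ t, (S t).ncard = Nat.fib (t + 1) := by
  intro t
  induction t using Nat.twoStepInduction with
  | zero => rw [S_zero]; simp
  | one => rw [S_one]; simp
  | more n ih1 ih2 =>
    have hd : Disjoint (S (n + 1)) (S n) := by
      rw [Set.disjoint_left]
      rintro x ⟨-, hx2⟩ ⟨hx1, -⟩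
      exact hx2 n (by omega) hx1
    rw [S_rec, Set.ncard_image_of_injective _ (fun a b h => by simpa using h),
      Set.ncard_union_eq hd (S_finite _) (S_finite _), ih1, ih2,
      show n + 2 + 1 = (n + 1) + 2 from rfl, Nat.fib_add_two (n := n + 1)]
    exact Nat.add_comm _ _

theorem stmt0 (t : ℕ) (ht : 1 ≤ t) :
    {x : List ℕ | x <+ alt t ∧ ¬ x <+ alt (t - 1)}.ncard = Nat.fib (t + 1) := by
  have hset : {x : List ℕ | x <+ alt t ∧ ¬ x <+ alt (t - 1)} = S t := by
    ext x
    simp only [Set.mem_setOf_eq, S]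
    constructor
    · rintro ⟨h1, h2⟩
      exact ⟨h1, fun s hs hc => h2 (hc.trans (alt_mono (by omega)))⟩
    · rintro ⟨h1, h2⟩
      exact ⟨h1, h2 (t - 1) (by omega)⟩
  rw [hset, S_card]
end

section
/- For an alphabet of size q and the length-t word M cycling through the alphabet as a_1 a_2 ... a_q a_1 a_2 ..., the number of distinct subsequences x of M with tau(x) = t (i.e., x is a subsequence of M but not of its length-(t-1) prefix) equals the t-th q-bonacci number F_q(t), where F_q(t) = 2^{t-1} for 1 <= t <= q and F_q(t) = F_q(t-1) + ... + F_q(t-q) for t > q. -/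
open List Finset

/-! The subsequences of `L ++ [a]` that are not subsequences of `L` are exactly the words `s ++ [a]`
with `s` a subsequence of `L` but `s ++ [a]` not. In the cycling word `cyc q n` with `q ≤ n` the
letter `n % q` last occurs at position `n - q`, so the second condition says that `s` is not a
subsequence of `cyc q (n - q)`. Writing `D m` for the number of distinct subsequences of `cyc q m`,
this gives `D (n + 1) - D n = D n - D (n - q)`, and telescoping the right-hand side over the last
`q` steps yields the `q`-bonacci recurrence. For `t ≤ q` the letters of `cyc q t` are distinct,
so `D t = 2 ^ t`. -/

namespace List

variable {α : Type*}

theorem cons_sublist_append_of_notMem {a : α} {l T M : List α} (hT : a ∉ T)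
    (h : a :: l <+ T ++ M) : a :: l <+ M := by
  induction T with
  | nil => exact h
  | cons b T ih =>
    cases h with
    | cons _ h => exact ih (fun hm => hT (mem_cons_of_mem _ hm)) h
    | cons_cons _ h => exact absurd mem_cons_self hT

theorem concat_sublist_append_iff_of_notMem {a : α} {s M T : List α} (hT : a ∉ T) :
    s ++ [a] <+ M ++ T ↔ s ++ [a] <+ M := by
  refine ⟨fun h => ?_, fun h => h.trans (sublist_append_left M T)⟩
  rw [← reverse_sublist] at h ⊢
  simp only [reverse_append, reverse_singleton, singleton_append] at h ⊢
  exact cons_sublist_append_of_notMem (by simpa using hT) h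

variable [DecidableEq α]

theorem card_sublists_concat_sdiff (L : List α) (a : α) :
    ((L ++ [a]).sublists.toFinset \ L.sublists.toFinset).card =
      {s ∈ L.sublists.toFinset | ¬ s ++ [a] <+ L}.card := by
  symm
  refine Finset.card_bij (fun s _ => s ++ [a]) ?_ (fun _ _ _ _ => append_cancel_right) ?_
  · intro s hs
    simp only [Finset.mem_filter, Finset.mem_sdiff, mem_toFinset, mem_sublists] at hs ⊢
    exact ⟨(append_sublist_append_right _).2 hs.1, hs.2⟩
  · intro y hy
    simp only [Finset.mem_sdiff, mem_toFinset, mem_sublists] at hy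
    obtain ⟨hy, hyL⟩ := hy
    obtain ⟨s, b, rfl, hs, hb⟩ := sublist_append_iff.mp hy
    rcases sublist_singleton.mp hb with rfl | rfl
    · exact absurd (by simpa using hs) hyL
    · exact ⟨s, by simpa [hs] using hyL, rfl⟩

end List

theorem cyc_succ (q n : ℕ) : cyc q (n + 1) = cyc q n ++ [n % q] := by
  simp [cyc, List.range_succ]

theorem cyc_add (q m k : ℕ) :
    cyc q (m + k) = cyc q m ++ (List.range k).map (fun j => (m + j) % q) := by
  simp [cyc, List.range_add, Function.comp_def]

theorem cyc_sublist_cyc (q : ℕ) {m n : ℕ} (h : m ≤ n) : cyc q m <+ cyc q n :=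
  (List.range_sublist.mpr h).map _

theorem cyc_of_le {q t : ℕ} (h : t ≤ q) : cyc q t = List.range t := by
  rw [cyc, List.map_congr_left (g := id), List.map_id]
  intro a ha
  exact Nat.mod_eq_of_lt ((List.mem_range.mp ha).trans_le h)

theorem mod_notMem_cyc_window {q : ℕ} (m : ℕ) :
    m % q ∉ (List.range (q - 1)).map (fun j => (m + 1 + j) % q) := by
  simp only [List.mem_map, List.mem_range, not_exists, not_and]
  intro j hj hmod
  have : 1 + j ≡ 0 [MOD q] :=
    Nat.ModEq.add_left_cancel' m (by simpa [Nat.ModEq, add_assoc] using hmod)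
  rw [Nat.ModEq, Nat.zero_mod, Nat.mod_eq_of_lt (by omega)] at this
  omega

theorem concat_mod_sublist_cyc_iff {q n : ℕ} (hq : 0 < q) (hn : q ≤ n) {s : List ℕ} :
    s ++ [n % q] <+ cyc q n ↔ s <+ cyc q (n - q) := by
  obtain ⟨m, rfl⟩ : ∃ m, n = m + q := ⟨n - q, by omega⟩
  have hsplit : cyc q (m + q) = cyc q m ++ [m % q] ++
      (List.range (q - 1)).map (fun j => (m + 1 + j) % q) := by
    rw [show m + q = m + 1 + (q - 1) by omega, cyc_add, cyc_succ]
  rw [Nat.add_mod_right, hsplit,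
    List.concat_sublist_append_iff_of_notMem (mod_notMem_cyc_window m),
    List.append_sublist_append_right, Nat.add_sub_cancel]

def cycSubseqs (q m : ℕ) : Finset (List ℕ) := (cyc q m).sublists.toFinset

theorem mem_cycSubseqs {q m : ℕ} {x : List ℕ} : x ∈ cycSubseqs q m ↔ x <+ cyc q m := by
  simp [cycSubseqs]

theorem cycSubseqs_mono (q : ℕ) : Monotone (cycSubseqs q) := fun _ _ h _ hx =>
  mem_cycSubseqs.mpr ((mem_cycSubseqs.mp hx).trans (cyc_sublist_cyc q h))

theorem card_cycSubseqs_of_le {q t : ℕ} (h : t ≤ q) : (cycSubseqs q t).card = 2 ^ t := by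
  rw [cycSubseqs, List.toFinset_card_of_nodup, List.length_sublists, cyc_of_le h,
    List.length_range]
  rw [List.nodup_sublists, cyc_of_le h]
  exact List.nodup_range

theorem card_cycSubseqs_succ_sdiff {q n : ℕ} (hq : 0 < q) (hn : q ≤ n) :
    (cycSubseqs q (n + 1) \ cycSubseqs q n).card =
      (cycSubseqs q n \ cycSubseqs q (n - q)).card := by
  simp only [cycSubseqs, cyc_succ]
  rw [List.card_sublists_concat_sdiff]
  congr 1
  ext s
  simp only [Finset.mem_filter, Finset.mem_sdiff, mem_toFinset, mem_sublists,
    concat_mod_sublist_cyc_iff hq hn]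

theorem tsub_eq_sum_range_tsub_of_monotone {f : ℕ → ℕ} (hf : Monotone f) {k n : ℕ}
    (hk : k ≤ n) : f n - f (n - k) = ∑ i ∈ Finset.range k, (f (n - i) - f (n - i - 1)) := by
  induction k with
  | zero => simp
  | succ k ih =>
    rw [Finset.sum_range_succ, ← ih (by omega), show n - (k + 1) = n - k - 1 by omega]
    have := hf (show n - k ≤ n by omega)
    have := hf (show n - k - 1 ≤ n - k by omega)
    omega

theorem card_cycSubseqs_sdiff_pred {q : ℕ} (hq : 0 < q) {t : ℕ} (ht : 0 < t) :
    (cycSubseqs q t \ cycSubseqs q (t - 1)).card = qbonacci q t := by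
  have hD : ∀ m, (cycSubseqs q m \ cycSubseqs q (m - 1)).card =
      (cycSubseqs q m).card - (cycSubseqs q (m - 1)).card := fun m =>
    Finset.card_sdiff_of_subset (cycSubseqs_mono q (Nat.sub_le m 1))
  induction t using Nat.strong_induction_on with
  | _ t ih =>
    obtain ⟨n, rfl⟩ : ∃ n, t = n + 1 := ⟨t - 1, by omega⟩
    rw [qbonacci]
    split_ifs with hsmall
    · rw [hD, Nat.add_sub_cancel, card_cycSubseqs_of_le hsmall, card_cycSubseqs_of_le (by omega),
        pow_succ]
      omega
    · have hqn : q ≤ n := by omega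
      rw [Nat.add_sub_cancel, card_cycSubseqs_succ_sdiff hq hqn,
        Finset.card_sdiff_of_subset (cycSubseqs_mono q (Nat.sub_le n q)),
        tsub_eq_sum_range_tsub_of_monotone (fun _ _ h => Finset.card_le_card (cycSubseqs_mono q h))
          hqn]
      refine Finset.sum_congr rfl fun i hi => ?_
      rw [← hD, ih (n - i) (by omega) (by have := Finset.mem_range.mp hi; omega)]

theorem stmt2 (q t : ℕ) (hq : 1 ≤ q) (ht : 1 ≤ t) :
    {x : List ℕ | x <+ cyc q t ∧ ¬ x <+ cyc q (t - 1)}.ncard = qbonacci q t := by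
  have hset : {x : List ℕ | x <+ cyc q t ∧ ¬ x <+ cyc q (t - 1)} =
      ↑(cycSubseqs q t \ cycSubseqs q (t - 1)) := by
    ext x
    simp [mem_cycSubseqs]
  rw [hset, Set.ncard_coe_finset, card_cycSubseqs_sdiff_pred hq ht]
end

section
/- For any word M of length t over an alphabet Sigma of size q, the number of distinct subsequences of M (including the empty subsequence) is at most F_q(0) + F_q(1) + ... + F_q(t), with equality when M cycles through the alphabet; i.e., cyclic master lineups maximize the number of distinct subsequences. -/
open List Finset

/-!
Every nonempty subsequence of `N` is `b :: y`, where `b` is a letter of `N` and `y` is a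
subsequence of the suffix of `N` after the first occurrence of `b`. So the number `g(N)` of
distinct subsequences is `1 + ∑_b g(suffix_b)`. The suffixes have pairwise distinct lengths
below `|N|`, and there are at most `q` of them, so by induction and monotonicity
`g(N) ≤ 1 + S(t-1) + ⋯ + S(t-q) = S(t)`, where `S(t) = F_q(0) + ⋯ + F_q(t)`. In a cyclic word
the first occurrences are exactly the first `min(q, t)` positions and every suffix is again
cyclic, so equality holds throughout.
-/

def qbonacciSum (q t : ℕ) : ℕ := ∑ i ∈ Finset.range (t + 1), qbonacci q i

lemma qbonacciSum_succ (q t : ℕ) :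
    qbonacciSum q (t + 1) = qbonacciSum q t + qbonacci q (t + 1) :=
  Finset.sum_range_succ _ _

lemma qbonacciSum_mono (q : ℕ) : Monotone (qbonacciSum q) := fun _ _ h =>
  Finset.sum_le_sum_of_subset (Finset.range_subset_range.2 (by omega))

lemma qbonacciSum_eq_two_pow {q t : ℕ} (h : t ≤ q) : qbonacciSum q t = 2 ^ t := by
  induction t with
  | zero => simp [qbonacciSum, qbonacci]
  | succ n ih =>
    rw [qbonacciSum_succ, ih (by omega), qbonacci, if_pos h]
    ring

lemma qbonacci_succ_add_qbonacciSum {q t : ℕ} (h : q ≤ t) :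
    qbonacci q (t + 1) + qbonacciSum q (t - q) = qbonacciSum q t := by
  have hsplit : qbonacciSum q t
      = qbonacciSum q (t - q) + ∑ i ∈ Finset.range q, qbonacci q (t - q + 1 + i) := by
    rw [qbonacciSum, qbonacciSum, ← Finset.sum_range_add]
    congr 2
    omega
  rw [hsplit, add_comm, qbonacci, if_neg (by omega),
    ← Finset.sum_range_reflect (fun i => qbonacci q (t - q + 1 + i))]
  congr 1
  refine Finset.sum_congr rfl fun i hi => ?_
  rw [Finset.mem_range] at hi
  congr 1
  omega

lemma qbonacciSum_eq_one_add_sum_Ico (q t : ℕ) :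
    qbonacciSum q t = 1 + ∑ i ∈ Finset.Ico (t - q) t, qbonacciSum q i := by
  induction t with
  | zero => simp [qbonacciSum, qbonacci]
  | succ n ih =>
    have hwindow : ∑ i ∈ Finset.Ico (n - q) (n + 1), qbonacciSum q i
        = qbonacciSum q n + ∑ i ∈ Finset.Ico (n - q) n, qbonacciSum q i :=
      (Finset.sum_Ico_succ_top (by omega) _).trans (add_comm _ _)
    rcases lt_or_ge n q with h | h
    · have hn := qbonacciSum_eq_two_pow h.le
      have hn1 := qbonacciSum_eq_two_pow (by omega : n + 1 ≤ q)
      rw [pow_succ] at hn1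
      rw [show n + 1 - q = n - q by omega, hwindow]
      omega
    · have hshift : ∑ i ∈ Finset.Ico (n - q) (n + 1), qbonacciSum q i
          = qbonacciSum q (n - q) + ∑ i ∈ Finset.Ico (n + 1 - q) (n + 1), qbonacciSum q i := by
        rw [Finset.sum_eq_sum_Ico_succ_bot (by omega), show n - q + 1 = n + 1 - q by omega]
      have hrec := qbonacci_succ_add_qbonacciSum h
      rw [qbonacciSum_succ]
      omega

lemma Monotone.sum_le_sum_Ico_of_subset_range {f : ℕ → ℕ} (hf : Monotone f) {t q : ℕ}
    {L : Finset ℕ} (hL : L ⊆ Finset.range t) (hcard : #L ≤ q) :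
    ∑ i ∈ L, f i ≤ ∑ i ∈ Finset.Ico (t - q) t, f i := by
  induction t generalizing q L with
  | zero => simp [Finset.subset_empty.1 (by simpa using hL)]
  | succ n ih =>
    by_cases hn : n ∈ L
    · have hq : 0 < q := (Finset.card_pos.2 ⟨n, hn⟩).trans_le hcard
      have hL' : L.erase n ⊆ Finset.range n := fun x hx => by
        have := hL (Finset.mem_of_mem_erase hx)
        simp only [Finset.mem_range] at this ⊢
        exact lt_of_le_of_ne (Nat.lt_succ_iff.1 this) (Finset.ne_of_mem_erase hx)
      have hcard' : #(L.erase n) ≤ q - 1 := by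
        rw [Finset.card_erase_of_mem hn]; omega
      rw [← Finset.sum_erase_add _ _ hn, Finset.sum_Ico_succ_top (by omega),
        show n + 1 - q = n - (q - 1) by omega]
      exact Nat.add_le_add_right (ih hL' hcard') _
    · have hL' : L ⊆ Finset.range n := fun x hx => by
        have := hL hx
        simp only [Finset.mem_range] at this ⊢
        exact lt_of_le_of_ne (Nat.lt_succ_iff.1 this) (ne_of_mem_of_not_mem hx hn)
      calc ∑ i ∈ L, f i ≤ ∑ i ∈ Finset.Ico (n - q) n, f i := ih hL' hcard
        _ ≤ ∑ i ∈ Finset.Ico (n - q) n, f (i + 1) := Finset.sum_le_sum fun i _ => hf (by omega)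
        _ = ∑ i ∈ Finset.Ico (n - q + 1) (n + 1), f i := by
          rw [← Finset.map_add_right_Ico _ _ 1, Finset.sum_map]; rfl
        _ ≤ ∑ i ∈ Finset.Ico (n + 1 - q) (n + 1), f i :=
          Finset.sum_le_sum_of_subset (Finset.Ico_subset_Ico (by omega) le_rfl)

section Sublists

variable {α : Type*}

lemma cons_sublist_append_cons_iff {b : α} {L R y : List α} (hb : b ∉ L) :
    b :: y <+ L ++ b :: R ↔ y <+ R := by
  refine ⟨fun h => ?_, fun h => (List.cons_sublist_cons.2 h).trans (List.sublist_append_right _ _)⟩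
  induction L with
  | nil => exact List.cons_sublist_cons.1 h
  | cons c L ih =>
    rw [List.mem_cons, not_or] at hb
    cases h with
    | cons _ h => exact ih hb.2 h
    | cons_cons => exact absurd rfl hb.1

variable [DecidableEq α]

lemma ncard_setOf_sublist (M : List α) : {x | x <+ M}.ncard = #M.sublists.toFinset := by
  rw [← Set.ncard_coe_finset]
  congr
  ext x
  simp

lemma card_sublists_toFinset_eq_one_add_sum {ι : Type*} (N : List α) (I : Finset ι)
    (b : ι → α) (R : ι → List α) (hinj : Set.InjOn b I) (hcover : ∀ a ∈ N, ∃ i ∈ I, b i = a)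
    (hsplit : ∀ i ∈ I, ∃ L, N = L ++ b i :: R i ∧ b i ∉ L) :
    #N.sublists.toFinset = 1 + ∑ i ∈ I, #(R i).sublists.toFinset := by
  have hcons : ∀ i ∈ I, ∀ y, b i :: y <+ N ↔ y <+ R i := fun i hi y => by
    obtain ⟨L, hN, hL⟩ := hsplit i hi
    rw [hN]
    exact cons_sublist_append_cons_iff hL
  have hdecomp : N.sublists.toFinset
      = insert [] (I.biUnion fun i => (R i).sublists.toFinset.image (b i :: ·)) := by
    ext x
    simp only [List.mem_toFinset, List.mem_sublists, Finset.mem_insert, Finset.mem_biUnion,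
      Finset.mem_image]
    constructor
    · rintro hx
      cases x with
      | nil => exact Or.inl rfl
      | cons c y =>
        obtain ⟨i, hi, rfl⟩ := hcover c (hx.subset List.mem_cons_self)
        exact Or.inr ⟨i, hi, y, (hcons i hi y).1 hx, rfl⟩
    · rintro (rfl | ⟨i, hi, y, hy, rfl⟩)
      · exact List.nil_sublist N
      · exact (hcons i hi y).2 hy
  have hnil : [] ∉ I.biUnion fun i => (R i).sublists.toFinset.image (b i :: ·) := by
    simp
  have hdisj : (I : Set ι).PairwiseDisjoint fun i => (R i).sublists.toFinset.image (b i :: ·) := by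
    intro i hi j hj hij
    simp only [Function.onFun, Finset.disjoint_left, Finset.mem_image]
    rintro _ ⟨y, _, rfl⟩ ⟨z, _, hz⟩
    exact hij (hinj hj hi (List.cons.inj hz).1).symm
  rw [hdecomp, Finset.card_insert_of_notMem hnil, Finset.card_biUnion hdisj, add_comm]
  simp only [Finset.card_image_of_injective _ List.cons_injective]

lemma card_sublists_toFinset_le_qbonacciSum {q : ℕ} (N : List α) (hN : #N.toFinset ≤ q) :
    #N.sublists.toFinset ≤ qbonacciSum q N.length := by
  induction hn : N.length using Nat.strong_induction_on generalizing N with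
  | _ n ih =>
  have hsplit : ∀ a ∈ N.toFinset, ∃ L R, N = L ++ a :: R ∧ a ∉ L := fun a ha =>
    List.eq_append_cons_of_mem (List.mem_toFinset.1 ha)
  choose! L R hLR using hsplit
  have hlen : ∀ a ∈ N.toFinset, (L a).length + (R a).length + 1 = n := fun a ha => by
    rw [← hn, (hLR a ha).1]
    simp only [List.length_append, List.length_cons]
    omega
  have hlenInj : Set.InjOn (fun a => (R a).length) N.toFinset := fun a ha a' ha' h => by
    have hL : (L a).length = (L a').length := by
      have := hlen a ha; have := hlen a' ha'; simp only at h; omega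
    have := List.append_inj ((hLR a ha).1.symm.trans (hLR a' ha').1) hL
    exact (List.cons.inj this.2).1
  have hsub : ∀ a ∈ N.toFinset, (R a).toFinset ⊆ N.toFinset := fun a ha x hx => by
    rw [(hLR a ha).1]
    simp_all
  calc #N.sublists.toFinset = 1 + ∑ a ∈ N.toFinset, #(R a).sublists.toFinset :=
        card_sublists_toFinset_eq_one_add_sum N N.toFinset id R (Set.injOn_id _)
          (fun a ha => ⟨a, List.mem_toFinset.2 ha, rfl⟩) fun a ha => ⟨L a, hLR a ha⟩
    _ ≤ 1 + ∑ a ∈ N.toFinset, qbonacciSum q (R a).length := by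
        gcongr with a ha
        have := hlen a ha
        exact ih _ (by omega) _ ((Finset.card_le_card (hsub a ha)).trans hN) rfl
    _ = 1 + ∑ m ∈ N.toFinset.image fun a => (R a).length, qbonacciSum q m := by
        rw [Finset.sum_image hlenInj]
    _ ≤ 1 + ∑ m ∈ Finset.Ico (n - q) n, qbonacciSum q m := by
        refine Nat.add_le_add_left ?_ 1
        refine (qbonacciSum_mono q).sum_le_sum_Ico_of_subset_range ?_
          (Finset.card_image_le.trans hN)
        intro m hm
        obtain ⟨a, ha, rfl⟩ := Finset.mem_image.1 hm
        have := hlen a ha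
        rw [Finset.mem_range]
        omega
    _ = qbonacciSum q n := (qbonacciSum_eq_one_add_sum_Ico q n).symm

end Sublists

def cycFrom (q k t : ℕ) : List ℕ := (List.range t).map fun i => (k + i) % q

lemma cycFrom_eq_append {q k j t : ℕ} (h : j < t) :
    cycFrom q k t = cycFrom q k j ++ (k + j) % q :: cycFrom q (k + j + 1) (t - j - 1) := by
  obtain ⟨s, rfl⟩ := Nat.exists_eq_add_of_lt h
  rw [cycFrom, cycFrom, cycFrom, Nat.add_assoc, List.range_add, List.range_succ_eq_map,
    List.map_append, List.map_map, List.map_cons, List.map_map, Nat.add_sub_cancel_left,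
    Nat.add_sub_cancel]
  congr 2
  refine List.map_congr_left fun i _ => ?_
  simp only [Function.comp_apply]
  congr 1
  omega

lemma injOn_add_mod (q k : ℕ) : Set.InjOn (fun i => (k + i) % q) (Set.Iio q) :=
  fun _ hi _ hj h => (Nat.ModEq.add_left_cancel' k h).eq_of_lt_of_lt hi hj

lemma card_sublists_cycFrom {q : ℕ} (hq : 0 < q) (k t : ℕ) :
    #(cycFrom q k t).sublists.toFinset = qbonacciSum q t := by
  induction t using Nat.strong_induction_on generalizing k with
  | _ t ih =>
  have hinj : Set.InjOn (fun j => (k + j) % q) (Finset.range (min q t)) := fun i hi j hj =>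
    injOn_add_mod q k (by simp at hi; simp; omega) (by simp at hj; simp; omega)
  have hcover : ∀ a ∈ cycFrom q k t, ∃ j ∈ Finset.range (min q t), (k + j) % q = a := by
    intro a ha
    obtain ⟨i, hi, rfl⟩ := List.mem_map.1 ha
    rw [List.mem_range] at hi
    refine ⟨i % q, ?_, ?_⟩
    · have := Nat.mod_lt i hq
      have := Nat.mod_le i q
      simp only [Finset.mem_range]; omega
    · rw [Nat.add_mod, Nat.mod_mod, ← Nat.add_mod]
  have hsplit : ∀ j ∈ Finset.range (min q t), ∃ L, cycFrom q k t
      = L ++ (k + j) % q :: cycFrom q (k + j + 1) (t - j - 1) ∧ (k + j) % q ∉ L := by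
    intro j hj
    rw [Finset.mem_range] at hj
    refine ⟨cycFrom q k j, cycFrom_eq_append (by omega), fun hmem => ?_⟩
    obtain ⟨i, hi, he⟩ := List.mem_map.1 hmem
    rw [List.mem_range] at hi
    exact hi.ne (injOn_add_mod q k (by simp; omega) (by simp; omega) he)
  rw [card_sublists_toFinset_eq_one_add_sum _ _ _ _ hinj hcover hsplit,
    qbonacciSum_eq_one_add_sum_Ico, Finset.sum_Ico_eq_sum_range,
    show t - (t - q) = min q t by omega, ← Finset.sum_range_reflect]
  congr 1
  refine Finset.sum_congr rfl fun j hj => ?_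
  rw [Finset.mem_range] at hj
  rw [ih _ (by omega)]
  congr 1
  omega

theorem stmt5 (q t : ℕ) (hq : 1 ≤ q) :
    (∀ M : List ℕ, (∀ a ∈ M, a < q) → M.length = t →
        {x : List ℕ | x <+ M}.ncard ≤ ∑ i ∈ Finset.range (t + 1), qbonacci q i) ∧
    {x : List ℕ | x <+ cyc q t}.ncard = ∑ i ∈ Finset.range (t + 1), qbonacci q i := by
  refine ⟨fun M hM hlen => ?_, ?_⟩
  · have hletters : #M.toFinset ≤ q := by
      simpa using Finset.card_le_card (s := M.toFinset) (t := Finset.range q)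
        fun a ha => Finset.mem_range.2 (hM a (List.mem_toFinset.1 ha))
    rw [ncard_setOf_sublist, ← hlen]
    exact card_sublists_toFinset_le_qbonacciSum M hletters
  · have hcyc : cyc q t = cycFrom q 0 t := by simp [cyc, cycFrom]
    rw [ncard_setOf_sublist, hcyc]
    exact card_sublists_cycFrom hq 0 t
end

section
/- The number of distinct subsequences of the alternating binary word ACAC... of length t' = t that have length exactly t - r equals the binomial sum: sum over i from 0 to r of C(t - r, i), provided r <= t - r. -/
/-!
Let `N(m, r)` be the number of distinct length-`m` subsequences of an alternating word of
length `m + r`. Split by the first letter and embed it greedily: the subsequences of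
`a b a b …` starting with `a` are `a` followed by a subsequence of `b a b …`, and those
starting with `b` are `b` followed by a subsequence of the word without its first two letters.
Hence `N(m + 1, r + 1) = N(m, r + 1) + N(m, r)`, with `N(0, r) = N(m, 0) = 1`: this is Pascal's
rule for the partial row sums `∑ i ≤ r, C(m, i)`.
-/

open List Finset

theorem sum_range_choose_succ_succ (m r : ℕ) :
    ∑ i ∈ Finset.range (r + 2), (m + 1).choose i =
      ∑ i ∈ Finset.range (r + 2), m.choose i + ∑ i ∈ Finset.range (r + 1), m.choose i := by
  rw [Finset.sum_range_succ' _ (r + 1)]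
  simp only [Nat.choose_succ_succ, Finset.sum_add_distrib, Nat.choose_zero_right]
  rw [Finset.sum_range_succ' (fun i => m.choose i) (r + 1), Nat.choose_zero_right]
  ring

theorem sum_range_choose_zero (r : ℕ) :
    ∑ i ∈ Finset.range (r + 1), (0 : ℕ).choose i = 1 := by
  simp [Finset.sum_range_succ']

section Sublists

variable {α : Type*}

theorem setOf_sublist_length_zero (l : List α) : {x | x <+ l ∧ x.length = 0} = {[]} := by
  ext x
  simp only [Set.mem_ofPred_eq, Set.mem_singleton_iff, List.length_eq_zero_iff]
  exact ⟨And.right, fun hx => ⟨hx ▸ List.nil_sublist l, hx⟩⟩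

theorem setOf_sublist_length_eq_length {l : List α} {m : ℕ} (hl : l.length = m) :
    {x | x <+ l ∧ x.length = m} = {l} := by
  ext x
  simp only [Set.mem_ofPred_eq, Set.mem_singleton_iff]
  exact ⟨fun hx => hx.1.eq_of_length (hx.2.trans hl.symm),
    by rintro rfl; exact ⟨List.Sublist.refl x, hl⟩⟩

theorem cons_sublist_cons_cons_iff {a b c : α} {y l : List α} (hab : a ≠ b)
    (hl : ∀ d ∈ l, d = a ∨ d = b) :
    c :: y <+ a :: b :: l ↔ (c = a ∧ y <+ b :: l) ∨ (c = b ∧ y <+ l) := by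
  by_cases hca : c = a
  · subst hca
    simp [hab]
  rw [List.sublist_cons_iff, or_iff_left (by simp [hca])]
  by_cases hcb : c = b
  · subst hcb
    simp [hca]
  refine iff_of_false (fun hy => ?_) (by simp [hca, hcb])
  rcases List.mem_cons.1 (hy.subset List.mem_cons_self) with hc | hc
  exacts [hcb hc, (hl c hc).elim hca hcb]

theorem encard_setOf_sublist_cons_cons {a b : α} {l : List α} (hab : a ≠ b)
    (hl : ∀ d ∈ l, d = a ∨ d = b) (m : ℕ) :
    {x | x <+ a :: b :: l ∧ x.length = m + 1}.encard
      = {y | y <+ b :: l ∧ y.length = m}.encard + {y | y <+ l ∧ y.length = m}.encard := by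
  have hsplit : {x | x <+ a :: b :: l ∧ x.length = m + 1}
      = List.cons a '' {y | y <+ b :: l ∧ y.length = m}
        ∪ List.cons b '' {y | y <+ l ∧ y.length = m} := by
    ext (_ | ⟨c, y⟩)
    · simp
    · simp [cons_sublist_cons_cons_iff hab hl]
      tauto
  have hdisj : Disjoint (List.cons a '' {y | y <+ b :: l ∧ y.length = m})
      (List.cons b '' {y | y <+ l ∧ y.length = m}) := by
    rw [Set.disjoint_left]
    rintro _ ⟨y, -, rfl⟩ ⟨z, -, hz⟩
    exact hab (List.cons_eq_cons.1 hz).1.symm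
  rw [hsplit, Set.encard_union_eq hdisj, List.cons_injective.encard_image,
    List.cons_injective.encard_image]

end Sublists

def altFrom (p t : ℕ) : List ℕ := (List.range t).map fun i => (p + i) % 2

theorem alt_eq_altFrom_zero (t : ℕ) : alt t = altFrom 0 t := by
  simp [alt, altFrom]

theorem length_altFrom (p t : ℕ) : (altFrom p t).length = t := by
  simp [altFrom]

theorem altFrom_succ (p t : ℕ) : altFrom p (t + 1) = p % 2 :: altFrom (p + 1) t := by
  simp only [altFrom, List.range_succ_eq_map, List.map_cons, List.map_map, add_zero]
  congr 1
  exact List.map_congr_left fun i _ => by simp only [Function.comp_apply]; omega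

theorem altFrom_add_two_left (p t : ℕ) : altFrom (p + 2) t = altFrom p t :=
  List.map_congr_left fun i _ => by omega

theorem altFrom_add_two (p t : ℕ) :
    altFrom p (t + 2) = p % 2 :: (p + 1) % 2 :: altFrom p t := by
  rw [altFrom_succ, altFrom_succ, add_assoc, altFrom_add_two_left]

theorem mem_altFrom {p t d : ℕ} (hd : d ∈ altFrom p t) : d = p % 2 ∨ d = (p + 1) % 2 := by
  simp only [altFrom, List.mem_map, List.mem_range] at hd
  omega

theorem encard_setOf_sublist_altFrom (p m r : ℕ) :
    {x | x <+ altFrom p (m + r) ∧ x.length = m}.encard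
      = ∑ i ∈ Finset.range (r + 1), m.choose i := by
  induction m generalizing p r with
  | zero =>
    rw [setOf_sublist_length_zero, Set.encard_singleton, sum_range_choose_zero, Nat.cast_one]
  | succ m ih =>
    cases r with
    | zero => simp [setOf_sublist_length_eq_length (length_altFrom p _)]
    | succ r =>
      have htail : (p + 1) % 2 :: altFrom p (m + r) = altFrom (p + 1) (m + (r + 1)) := by
        rw [← add_assoc, altFrom_succ, add_assoc, altFrom_add_two_left]
      rw [show m + 1 + (r + 1) = m + r + 2 by omega, altFrom_add_two,
        encard_setOf_sublist_cons_cons (by omega) (fun d hd => mem_altFrom hd), htail, ih, ih,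
        sum_range_choose_succ_succ, Nat.cast_add]

theorem stmt7_general (t r : ℕ) :
    {x : List ℕ | x <+ alt t ∧ x.length = t - r}.ncard
      = ∑ i ∈ Finset.range (r + 1), Nat.choose (t - r) i := by
  rw [Set.ncard_def]
  rcases le_or_gt r t with hrt | htr
  · rw [alt_eq_altFrom_zero, ← Nat.sub_add_cancel hrt, Nat.add_sub_cancel,
      encard_setOf_sublist_altFrom, ENat.toNat_natCast]
  · rw [Nat.sub_eq_zero_of_le htr.le, setOf_sublist_length_zero, Set.encard_singleton,
      sum_range_choose_zero, ENat.toNat_one]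

theorem stmt7 (t r : ℕ) (h : r ≤ t - r) :
    {x : List ℕ | x <+ alt t ∧ x.length = t - r}.ncard
      = ∑ i ∈ Finset.range (r + 1), Nat.choose (t - r) i :=
  stmt7_general t r
end

section
/- If a word M of length t over alphabet {A,C,G} contains no two equal adjacent letters (no AA, CC, or GG factor), then the number of distinct subsequences of M is at least F(t+2) - 1, where F denotes Fibonacci numbers with F(1)=1, F(2)=2. -/
/-!
If `a ≠ b`, the subsequences of `a :: b :: l` include, pairwise distinct, the empty word, the words
`a :: s` for `s` a subsequence of `b :: l`, and the words `b :: s` for `s` a subsequence of `l`.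
So the number `N` of distinct subsequences satisfies `N (a :: b :: l) ≥ N (b :: l) + N l + 1`,
the recursion satisfied by `Nat.fib (t + 3) - 1`, and induction on the length gives the bound.
-/

open List

variable {α : Type*} [DecidableEq α]

theorem List.card_sublists_add_card_sublists_tail_lt {a b : α} (hab : a ≠ b) (l : List α) :
    (b :: l).sublists.toFinset.card + l.sublists.toFinset.card <
      (a :: b :: l).sublists.toFinset.card := by
  set startA := (b :: l).sublists.toFinset.image (a :: ·)
  set startB := l.sublists.toFinset.image (b :: ·)
  have hdisj : _root_.Disjoint startA startB := by
    simp only [startA, startB, Finset.disjoint_left, Finset.mem_image]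
    rintro _ ⟨s, -, rfl⟩ ⟨s', -, hs'⟩
    exact hab (cons_eq_cons.mp hs').1.symm
  have hnil : [] ∉ startA ∪ startB := by simp [startA, startB]
  have hsub : insert [] (startA ∪ startB) ⊆ (a :: b :: l).sublists.toFinset := by
    simp only [startA, startB, Finset.insert_subset_iff, Finset.union_subset_iff,
      Finset.image_subset_iff, mem_toFinset, mem_sublists]
    exact ⟨nil_sublist _, fun s hs => hs.cons_cons a, fun s hs => (hs.cons_cons b).cons a⟩
  calc (b :: l).sublists.toFinset.card + l.sublists.toFinset.card
      = startA.card + startB.card := by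
        rw [Finset.card_image_of_injective _ cons_injective,
          Finset.card_image_of_injective _ cons_injective]
    _ < (insert [] (startA ∪ startB)).card := by
        rw [Finset.card_insert_of_notMem hnil, Finset.card_union_of_disjoint hdisj]
        exact Nat.lt_succ_self _
    _ ≤ _ := Finset.card_le_card hsub

theorem List.fib_length_add_three_sub_one_le_card_sublists :
    ∀ {l : List α}, l.IsChain (· ≠ ·) → Nat.fib (l.length + 3) - 1 ≤ l.sublists.toFinset.card
  | [], _ => by simp [Nat.fib_add_two]
  | [_], _ => by simp [Nat.fib_add_two]
  | a :: b :: l, hl => by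
    obtain ⟨hab, hbl⟩ := isChain_cons_cons.mp hl
    have ihb := fib_length_add_three_sub_one_le_card_sublists hbl
    have ihl : Nat.fib (l.length + 3) - 1 ≤ l.sublists.toFinset.card :=
      fib_length_add_three_sub_one_le_card_sublists hbl.tail
    have hstep := card_sublists_add_card_sublists_tail_lt hab l
    have hfib : Nat.fib (l.length + 5) = Nat.fib (l.length + 3) + Nat.fib (l.length + 4) :=
      Nat.fib_add_two
    simp only [length_cons, Nat.add_assoc, Nat.reduceAdd] at ihb ⊢
    omega

theorem stmt8 (t : ℕ) (M : List (Fin 3)) (hlen : M.length = t)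
    (hM : M.Chain' (· ≠ ·)) :
    Nat.fib (t + 3) - 1 ≤ {x : List (Fin 3) | x <+ M}.ncard := by
  have hset : {x : List (Fin 3) | x <+ M} = M.sublists.toFinset := by
    ext x
    simp
  rw [hset, Set.ncard_coe_finset, ← hlen]
  exact fib_length_add_three_sub_one_le_card_sublists hM
end

section
/- The number of pairs (M, x) with M a word of length t over alphabet {A,C,G} and x a subsequence of M is at least 3 · 2^{t-1} · (F(t+2) - 1), where F is the Fibonacci sequence with F(1)=1, F(2)=2. -/
/-!
Words whose consecutive letters differ are plentiful and have many subsequences.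
Over `Fin 3` there are `3 * 2 ^ (t - 1)` of them of length `t`: the first letter is free and
each later letter avoids its predecessor. If `a ≠ b`, the subsequences of `a :: b :: l` that
start with `a`, those that start with `b`, and the empty one are pairwise distinct, so the
number `N` of subsequences satisfies `N (a :: b :: l) ≥ N (b :: l) + N l + 1`; hence `N + 1`
dominates the Fibonacci numbers.
-/

open List Finset

section Subsequences

variable {α : Type*} [DecidableEq α]

def subseqs (w : List α) : Finset (List α) := w.sublists.toFinset

@[simp]
lemma mem_subseqs {s w : List α} : s ∈ subseqs w ↔ s <+ w := by
  simp [subseqs]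

lemma card_subseqs_cons_cons {a b : α} (l : List α) (hab : a ≠ b) :
    #(subseqs (b :: l)) + #(subseqs l) + 1 ≤ #(subseqs (a :: b :: l)) := by
  set A := (subseqs (b :: l)).map ⟨(a :: ·), cons_injective⟩
  set B := (subseqs l).map ⟨(b :: ·), cons_injective⟩
  have hAB : Disjoint A B := by
    rw [Finset.disjoint_left]
    rintro _ hA hB
    obtain ⟨u, -, rfl⟩ := Finset.mem_map.mp hA
    obtain ⟨v, -, h⟩ := Finset.mem_map.mp hB
    exact hab (cons.inj h).1.symm
  calc #(subseqs (b :: l)) + #(subseqs l) + 1 = #(insert [] (A ∪ B)) := by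
        rw [card_insert_of_notMem (by simp [A, B]), card_union_of_disjoint hAB, card_map,
          card_map]
    _ ≤ #(subseqs (a :: b :: l)) := by
        refine card_le_card fun s hs => ?_
        simp only [A, B, mem_insert, mem_union, Finset.mem_map, mem_subseqs,
          Function.Embedding.coeFn_mk] at hs ⊢
        rcases hs with rfl | ⟨u, hu, rfl⟩ | ⟨u, hu, rfl⟩
        · exact nil_sublist _
        · exact hu.cons_cons a
        · exact (hu.cons_cons b).cons a

lemma fib_le_card_subseqs_add_one :
    ∀ {w : List α}, w.IsChain (· ≠ ·) → Nat.fib (w.length + 3) ≤ #(subseqs w) + 1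
  | [], _ => by simp [subseqs, Nat.fib_add_two]
  | [a], _ => by simp [subseqs, Nat.fib_add_two]
  | a :: b :: l, h => by
    have hab : a ≠ b := (isChain_cons_cons.mp h).1
    have ih₁ := fib_le_card_subseqs_add_one h.tail
    have ih₂ := fib_le_card_subseqs_add_one h.tail.tail
    have hrec := card_subseqs_cons_cons l hab
    have hfib : Nat.fib (l.length + 5) = Nat.fib (l.length + 3) + Nat.fib (l.length + 4) :=
      Nat.fib_add_two
    simp only [length_cons, tail_cons, add_assoc, Nat.reduceAdd] at ih₁ ih₂ ⊢
    omega

end Subsequences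

section NonRepeatingWords

variable {k : ℕ}

/-- `b.succ` ranges over the nonzero shifts of `Fin (k + 1)`, so consecutive letters differ. -/
def jumpWord (a : Fin (k + 1)) : List (Fin k) → List (Fin (k + 1))
  | [] => [a]
  | b :: bs => a :: jumpWord (a + b.succ) bs

lemma length_jumpWord (a : Fin (k + 1)) (bs : List (Fin k)) :
    (jumpWord a bs).length = bs.length + 1 := by
  induction bs generalizing a with
  | nil => rfl
  | cons b bs ih => simp [jumpWord, ih]

lemma jumpWord_eq_cons (a : Fin (k + 1)) (bs : List (Fin k)) :
    ∃ l, jumpWord a bs = a :: l := by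
  cases bs <;> exact ⟨_, rfl⟩

lemma isChain_jumpWord (a : Fin (k + 1)) (bs : List (Fin k)) :
    (jumpWord a bs).IsChain (· ≠ ·) := by
  induction bs generalizing a with
  | nil => exact isChain_singleton a
  | cons b bs ih =>
    obtain ⟨l, hl⟩ := jumpWord_eq_cons (a + b.succ) bs
    have hne : a ≠ a + b.succ := by simp [Fin.succ_ne_zero]
    have ih' := ih (a + b.succ)
    rw [hl] at ih'
    rw [jumpWord, hl]
    exact ih'.cons_cons hne

lemma jumpWord_injective2 : Function.Injective2 (jumpWord (k := k)) := by
  intro a a' bs bs' h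
  induction bs generalizing a a' bs' with
  | nil =>
    cases bs' with
    | nil => simpa [jumpWord] using h
    | cons => simpa [length_jumpWord] using congrArg length h
  | cons b bs ih =>
    cases bs' with
    | nil => simpa [length_jumpWord] using congrArg length h
    | cons b' bs' =>
      obtain ⟨rfl, h⟩ := List.cons.inj h
      obtain ⟨hb, rfl⟩ := ih h
      exact ⟨rfl, by rw [Fin.succ_injective _ (add_left_cancel hb)]⟩

variable (k) in
def nonRepeatingWords (n : ℕ) : Finset (List (Fin (k + 1))) :=
  univ.image fun p : Fin (k + 1) × (Fin n → Fin k) => jumpWord p.1 (ofFn p.2)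

lemma card_nonRepeatingWords (n : ℕ) : #(nonRepeatingWords k n) = (k + 1) * k ^ n := by
  have hinj :
      Function.Injective fun p : Fin (k + 1) × (Fin n → Fin k) => jumpWord p.1 (ofFn p.2) :=
    jumpWord_injective2.uncurry.comp (Function.injective_id.prodMap ofFn_injective)
  rw [nonRepeatingWords, card_image_of_injective _ hinj]
  simp

lemma of_mem_nonRepeatingWords {n : ℕ} {w : List (Fin (k + 1))}
    (hw : w ∈ nonRepeatingWords k n) :
    w.length = n + 1 ∧ w.IsChain (· ≠ ·) := by
  obtain ⟨⟨a, v⟩, -, rfl⟩ := mem_image.mp hw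
  exact ⟨by simp [length_jumpWord], isChain_jumpWord a _⟩

end NonRepeatingWords

lemma sum_card_subseqs_le_ncard {α : Type*} [DecidableEq α] [Finite α] {t : ℕ}
    (W : Finset (List α)) (hW : ∀ w ∈ W, w.length = t) :
    ∑ w ∈ W, #(subseqs w) ≤ {p : List α × List α | p.1.length = t ∧ p.2 <+ p.1}.ncard := by
  set P := (W.sigma subseqs).map (Equiv.sigmaEquivProd _ _).toEmbedding
  have hPS : ↑P ⊆ {p : List α × List α | p.1.length = t ∧ p.2 <+ p.1} := by
    rintro ⟨w, s⟩ hp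
    simp only [P, mem_coe, mem_map_equiv, Finset.mem_sigma, mem_subseqs] at hp
    exact ⟨hW w hp.1, hp.2⟩
  have hfin : {p : List α × List α | p.1.length = t ∧ p.2 <+ p.1}.Finite := by
    refine ((finite_length_le α t).prod (finite_length_le α t)).subset ?_
    rintro ⟨w, s⟩ ⟨hw, hs⟩
    exact ⟨hw.le, hs.length_le.trans hw.le⟩
  calc ∑ w ∈ W, #(subseqs w) = #P := by rw [card_map, card_sigma]
    _ = (P : Set (List α × List α)).ncard := (Set.ncard_coe_finset P).symm
    _ ≤ _ := Set.ncard_le_ncard hPS hfin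

theorem stmt10 (t : ℕ) (ht : 1 ≤ t) :
    3 * 2 ^ (t - 1) * (Nat.fib (t + 3) - 1)
      ≤ {p : List (Fin 3) × List (Fin 3) | p.1.length = t ∧ p.2 <+ p.1}.ncard := by
  obtain ⟨n, rfl⟩ : ∃ n, t = n + 1 := ⟨t - 1, by omega⟩
  have hW := @of_mem_nonRepeatingWords 2 n
  calc 3 * 2 ^ (n + 1 - 1) * (Nat.fib (n + 1 + 3) - 1)
      = ∑ _w ∈ nonRepeatingWords 2 n, (Nat.fib (n + 1 + 3) - 1) := by
        rw [sum_const, card_nonRepeatingWords, smul_eq_mul, Nat.add_sub_cancel]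
    _ ≤ ∑ w ∈ nonRepeatingWords 2 n, #(subseqs w) := sum_le_sum fun w hw => by
        have := fib_le_card_subseqs_add_one (hW hw).2
        rw [(hW hw).1] at this
        omega
    _ ≤ _ := sum_card_subseqs_le_ncard _ fun w hw => (hW hw).1
end

section
/- Let 2 <= p <= q. If M is a word of length t over an alphabet of size q in which every p consecutive letters are pairwise distinct, then the number of distinct subsequences of M is at least F_p(0) + F_p(1) + ... + F_p(t), where F_p is the p-bonacci sequence. -/
open List Finset

/-! ### Auxiliary material -/

/-- Partial sums of the `p`-bonacci sequence. -/
def S13 (p m : ℕ) : ℕ := ∑ i ∈ Finset.range (m + 1), qbonacci p i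

lemma qbonacci_succ (p t : ℕ) :
    qbonacci p (t + 1) =
      if t + 1 ≤ p then 2 ^ t else ∑ i ∈ Finset.range p, qbonacci p (t - i) := by
  rw [qbonacci]

lemma S13_zero (p : ℕ) : S13 p 0 = 1 := by simp [S13, qbonacci]

lemma S13_succ (p m : ℕ) : S13 p (m + 1) = S13 p m + qbonacci p (m + 1) :=
  Finset.sum_range_succ _ _

lemma two_pow_sum (n : ℕ) : 1 + ∑ j ∈ Finset.range n, 2 ^ j = 2 ^ n := by
  induction n with
  | zero => simp
  | succ n ih => rw [Finset.sum_range_succ, pow_succ]; omega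

lemma S13_of_le {p m : ℕ} (h : m ≤ p) : S13 p m = 2 ^ m := by
  induction m with
  | zero => simpa using S13_zero p
  | succ n ih =>
    rw [S13_succ, ih (by omega), qbonacci_succ, if_pos h, pow_succ]
    omega

lemma S13_rec_gt {p : ℕ} (hp : 1 ≤ p) :
    ∀ k, S13 p (p + k) = 1 + ∑ i ∈ Finset.range p, S13 p (p + k - 1 - i) := by
  intro k
  induction k with
  | zero =>
    simp only [Nat.add_zero]
    rw [S13_of_le le_rfl]
    have h1 : ∑ i ∈ Finset.range p, S13 p (p - 1 - i)
        = ∑ j ∈ Finset.range p, S13 p j :=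
      Finset.sum_range_reflect (fun j => S13 p j) p
    rw [h1]
    have h2 : ∑ j ∈ Finset.range p, S13 p j = ∑ j ∈ Finset.range p, 2 ^ j :=
      Finset.sum_congr rfl fun j hj => S13_of_le (by
        have := Finset.mem_range.mp hj; omega)
    rw [h2, two_pow_sum]
  | succ k ih =>
    have hq : qbonacci p (p + k + 1) = ∑ i ∈ Finset.range p, qbonacci p (p + k - i) := by
      rw [qbonacci_succ, if_neg (by omega)]
    have key : ∑ i ∈ Finset.range p, S13 p (p + k + 1 - 1 - i)
        = ∑ i ∈ Finset.range p, (S13 p (p + k - 1 - i) + qbonacci p (p + k - i)) := by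
      refine Finset.sum_congr rfl fun i hi => ?_
      have hi' : i < p := Finset.mem_range.mp hi
      have e1 : p + k + 1 - 1 - i = (p + k - 1 - i) + 1 := by omega
      have e2 : p + k - i = (p + k - 1 - i) + 1 := by omega
      rw [e1, S13_succ, ← e2]
    have e3 : p + (k + 1) = (p + k) + 1 := rfl
    rw [e3, S13_succ, ih, hq, key, Finset.sum_add_distrib]
    omega

lemma S13_rec {p m : ℕ} (hp : 1 ≤ p) (hm : 1 ≤ m) :
    S13 p m = 1 + ∑ i ∈ Finset.range (min p m), S13 p (m - 1 - i) := by
  rcases le_or_gt m p with h | h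
  · rw [Nat.min_eq_right h, S13_of_le h]
    have h1 : ∑ i ∈ Finset.range m, S13 p (m - 1 - i) = ∑ j ∈ Finset.range m, S13 p j :=
      Finset.sum_range_reflect (fun j => S13 p j) m
    rw [h1]
    have h2 : ∑ j ∈ Finset.range m, S13 p j = ∑ j ∈ Finset.range m, 2 ^ j :=
      Finset.sum_congr rfl fun j hj => S13_of_le (by
        have := Finset.mem_range.mp hj; omega)
    rw [h2, two_pow_sum]
  · obtain ⟨k, rfl⟩ : ∃ k, m = p + k := ⟨m - p, by omega⟩
    rw [Nat.min_eq_left (by omega)]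
    exact S13_rec_gt hp k

/-- Finset of "good" index lists: strictly increasing lists with entries in `[s, t)`,
first entry `< s + p`, and consecutive gaps at most `p`.  `fuel` bounds recursion. -/
def glists (p t : ℕ) : ℕ → ℕ → Finset (List ℕ)
  | 0, _ => {[]}
  | fuel + 1, s =>
    insert []
      ((Finset.Ico s (min (s + p) t)).biUnion fun h => (glists p t fuel (h + 1)).image (h :: ·))

lemma glists_card {p : ℕ} (hp : 1 ≤ p) (t : ℕ) :
    ∀ fuel s, t ≤ s + fuel → (glists p t fuel s).card = S13 p (t - s) := by
  intro fuel
  induction fuel with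
  | zero =>
    intro s hts
    have : t - s = 0 := by omega
    rw [this, S13_zero]
    simp [glists]
  | succ n ih =>
    intro s hts
    rcases le_or_gt t s with h | h
    · have hIco : Finset.Ico s (min (s + p) t) = ∅ := Finset.Ico_eq_empty (by omega)
      have : t - s = 0 := by omega
      rw [this, S13_zero]
      simp [glists, hIco]
    · rw [glists]
      have hnotmem : ([] : List ℕ) ∉
          (Finset.Ico s (min (s + p) t)).biUnion
            fun h => (glists p t n (h + 1)).image (h :: ·) := by
        simp
      rw [Finset.card_insert_of_notMem hnotmem]
      have hdisj : ∀ x ∈ Finset.Ico s (min (s + p) t), ∀ y ∈ Finset.Ico s (min (s + p) t),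
          x ≠ y → Disjoint ((glists p t n (x + 1)).image (x :: ·))
            ((glists p t n (y + 1)).image (y :: ·)) := by
        intro x _ y _ hxy
        rw [Finset.disjoint_left]
        rintro l hl hl'
        simp only [Finset.mem_image] at hl hl'
        obtain ⟨a, _, rfl⟩ := hl
        obtain ⟨b, _, hb⟩ := hl'
        simp only [List.cons.injEq] at hb
        exact hxy hb.1.symm
      rw [Finset.card_biUnion hdisj]
      have hcards : ∑ h ∈ Finset.Ico s (min (s + p) t), ((glists p t n (h + 1)).image (h :: ·)).card
          = ∑ h ∈ Finset.Ico s (min (s + p) t), S13 p (t - (h + 1)) := by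
        refine Finset.sum_congr rfl fun x hx => ?_
        rw [Finset.card_image_of_injective _ (List.cons_injective), ih (x + 1)
          (by have := Finset.mem_Ico.mp hx; omega)]
      rw [hcards, Finset.sum_Ico_eq_sum_range]
      have hmin : min (s + p) t - s = min p (t - s) := by omega
      have hsum : ∑ i ∈ Finset.range (min (s + p) t - s), S13 p (t - (s + i + 1))
          = ∑ i ∈ Finset.range (min p (t - s)), S13 p ((t - s) - 1 - i) := by
        rw [hmin]
        exact Finset.sum_congr rfl fun i _ => by congr 1; omega
      rw [hsum, S13_rec hp (show 1 ≤ t - s by omega) (p := p)]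
      omega

/-- The inductive characterization of good index lists. -/
inductive GL13 (p t : ℕ) : ℕ → List ℕ → Prop
  | nil (s : ℕ) : GL13 p t s []
  | cons (s h : ℕ) (l : List ℕ) : s ≤ h → h < s + p → h < t → GL13 p t (h + 1) l →
      GL13 p t s (h :: l)

lemma glists_GL (p t : ℕ) :
    ∀ fuel s l, l ∈ glists p t fuel s → GL13 p t s l := by
  intro fuel
  induction fuel with
  | zero =>
    intro s l hl
    simp only [glists, Finset.mem_singleton] at hl
    subst hl
    exact GL13.nil s
  | succ n ih =>
    intro s l hl
    rw [glists, Finset.mem_insert] at hl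
    rcases hl with rfl | hl
    · exact GL13.nil s
    · obtain ⟨h, hh, hmem⟩ := Finset.mem_biUnion.mp hl
      obtain ⟨l', hl', rfl⟩ := Finset.mem_image.mp hmem
      obtain ⟨h1, h2⟩ := Finset.mem_Ico.mp hh
      exact GL13.cons s h l' h1 (by omega) (by omega) (ih (h + 1) l' hl')

lemma GL_sublist {α : Type*} (p : ℕ) (M : List α) (d : α) :
    ∀ s l, GL13 p M.length s l → l.map (fun i => M.getD i d) <+ M.drop s := by
  intro s l hgl
  induction hgl with
  | nil => simp
  | cons s h l hs hhp ht hgl ih =>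
    simp only [List.map_cons]
    have h1 : M.getD h d = M[h] := List.getD_eq_getElem M d ht
    have h2 : M.drop h = M[h] :: M.drop (h + 1) := List.drop_eq_getElem_cons ht
    have h3 : (M.getD h d) :: l.map (fun i => M.getD i d) <+ M.drop h := by
      rw [h1, h2]
      exact List.Sublist.cons₂ _ ih
    refine h3.trans ?_
    have h4 : M.drop h = (M.drop s).drop (h - s) := by
      rw [List.drop_drop]
      congr 1
      omega
    rw [h4]
    exact List.drop_sublist _ _

lemma GL_inj {α : Type*} (p : ℕ) (M : List α) (d : α)
    (hM : ∀ s, ((M.drop s).take p).Nodup) :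
    ∀ l₁ l₂ s, GL13 p M.length s l₁ → GL13 p M.length s l₂ →
      l₁.map (fun i => M.getD i d) = l₂.map (fun i => M.getD i d) → l₁ = l₂ := by
  intro l₁
  induction l₁ with
  | nil =>
    intro l₂ s _ _ heq
    cases l₂ <;> simp_all
  | cons a l ih =>
    intro l₂ s h₁ h₂ heq
    cases l₂ with
    | nil => simp at heq
    | cons b l₂' =>
      simp only [List.map_cons, List.cons.injEq] at heq
      obtain ⟨hab, htail⟩ := heq
      cases h₁ with
      | cons _ _ _ hs1 hp1 ht1 hg1 =>
      cases h₂ with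
      | cons _ _ _ hs2 hp2 ht2 hg2 =>
      have hab' : a = b := by
        by_contra hne
        have w := hM s
        have hwlen : ((M.drop s).take p).length = min p (M.length - s) := by
          simp [List.length_take, List.length_drop]
        have hw1 : a - s < ((M.drop s).take p).length := by rw [hwlen]; omega
        have hw2 : b - s < ((M.drop s).take p).length := by rw [hwlen]; omega
        have e1 : ((M.drop s).take p)[a - s] = M[a]'ht1 := by
          rw [List.getElem_take, List.getElem_drop]
          congr 1
          omega
        have e2 : ((M.drop s).take p)[b - s] = M[b]'ht2 := by
          rw [List.getElem_take, List.getElem_drop]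
          congr 1
          omega
        have hMab : M[a]'ht1 = M[b]'ht2 := by
          rw [← List.getD_eq_getElem M d ht1, ← List.getD_eq_getElem M d ht2]
          exact hab
        have : a - s = b - s := (w.getElem_inj_iff).mp (by rw [e1, e2]; exact hMab)
        omega
      subst hab'
      rw [ih l₂' (a + 1) hg1 hg2 htail]

theorem stmt13 {α : Type*} [Fintype α] (p q t : ℕ) (hp : 2 ≤ p) (hpq : p ≤ q)
    (hcard : Fintype.card α = q) (M : List α) (hlen : M.length = t)
    (hM : ∀ s, ((M.drop s).take p).Nodup) :
    ∑ i ∈ Finset.range (t + 1), qbonacci p i ≤ {x : List α | x <+ M}.ncard := by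
  classical
  subst hlen
  have hα : Nonempty α := by
    rw [← Fintype.card_pos_iff]
    omega
  obtain ⟨d⟩ := hα
  have hset : {x : List α | x <+ M} = ↑M.sublists.toFinset := by
    ext x
    simp [List.mem_sublists]
  rw [hset, Set.ncard_coe_finset]
  have hcard2 : (glists p M.length M.length 0).card
      = ∑ i ∈ Finset.range (M.length + 1), qbonacci p i := by
    rw [glists_card (by omega) M.length M.length 0 (by omega)]
    simp [S13]
  rw [← hcard2]
  apply Finset.card_le_card_of_injOn (fun l => l.map (fun i => M.getD i d))
  · intro l hl
    simp only [List.mem_toFinset, List.mem_sublists]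
    have := GL_sublist p M d 0 l (glists_GL p M.length M.length 0 l hl)
    simpa using this
  · intro l₁ h₁ l₂ h₂ heq
    exact GL_inj p M d hM l₁ l₂ 0
      (glists_GL p M.length M.length 0 l₁ h₁)
      (glists_GL p M.length M.length 0 l₂ h₂) heq
end

section
/- Let n be odd and Y a random t×n binary matrix with iid uniform entries. Let f(Y) be the indicator that every column of Y avoids p consecutive zeros, and g(Y) the indicator that every row of Y has strictly more ones than zeros. Then E[f(Y)g(Y)] >= F_p(t+1)^n / 2^{tn+t}. -/
open List Finset

/-!
Order `Fin t → Fin n → Bool` pointwise. The events `A` (no column has `p` consecutive zeros) and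
`B` (every row has a majority of ones) are up-sets: turning zeros into ones cannot create a run of
zeros nor destroy a majority of ones. By the Harris (FKG)
inequality on this distributive lattice, `|A| |B| ≤ 2^(tn) |A ∩ B|`. The columns are independent,
so `|A| = c^n` where `c` counts the words of length `t` without `p` consecutive zeros; the words
`0^i 1 w` with `i < p` and `w` such a word of length `t - 1 - i` are distinct and again such words,
which gives `F_p(t+1) ≤ c` by induction. The rows are independent too, and for odd `n` negation
exchanges majority and minority of ones, so `|B| = (2^(n-1))^t`.
-/

theorem card_filter_mul_card_filter_le_of_monotone {α : Type*} [DistribLattice α] [Fintype α]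
    {P Q : α → Prop} [DecidablePred P] [DecidablePred Q] (hP : Monotone P) (hQ : Monotone Q) :
    #(univ.filter P) * #(univ.filter Q) ≤ Fintype.card α * #(univ.filter fun a => P a ∧ Q a) := by
  have indicator_monotone {R : α → Prop} [DecidablePred R] (hR : Monotone R) :
      Monotone fun a => if R a then 1 else 0 := fun a b hab => by
    by_cases ha : R a
    · simp [ha, hR hab ha]
    · simp [ha]
  simpa only [Pi.one_apply, one_mul, ite_zero_mul_ite_zero, sum_boole, Nat.cast_id, sum_const,
    card_univ, smul_eq_mul, mul_one] using
    fkg _ _ (1 : α → ℕ) zero_le_one (fun _ => Nat.zero_le _) (fun _ => Nat.zero_le _)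
      (indicator_monotone hP) (indicator_monotone hQ) fun _ _ => le_rfl

theorem card_filter_forall_apply {ι α : Type*} [Fintype ι] [DecidableEq ι] [Fintype α]
    (P : α → Prop) [DecidablePred P] [DecidablePred fun f : ι → α => ∀ i, P (f i)] :
    #(univ.filter fun f : ι → α => ∀ i, P (f i)) = #(univ.filter P) ^ Fintype.card ι := by
  have : univ.filter (fun f : ι → α => ∀ i, P (f i)) = Fintype.piFinset fun _ => univ.filter P := by
    ext f
    simp [Fintype.mem_piFinset]
  simp [this]

theorem card_filter_forall_column {ι κ α : Type*} [Fintype ι] [DecidableEq ι] [Fintype κ]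
    [DecidableEq κ] [Fintype α] (P : (ι → α) → Prop) [DecidablePred P]
    [DecidablePred fun Y : ι → κ → α => ∀ k, P fun s => Y s k] :
    #(univ.filter fun Y : ι → κ → α => ∀ k, P fun s => Y s k) =
      #(univ.filter P) ^ Fintype.card κ := by
  rw [← card_filter_forall_apply]
  exact card_equiv (Equiv.piComm _) fun Y => by simp [Equiv.piComm]

namespace List

variable {α : Type*} {a b : α}

theorem eq_of_replicate_append_cons_eq (hab : a ≠ b) :
    ∀ {i j : ℕ} {l l' : List α}, replicate i a ++ b :: l = replicate j a ++ b :: l' →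
      i = j ∧ l = l'
  | 0, 0, _, _, h => ⟨rfl, (cons.inj h).2⟩
  | 0, _ + 1, _, _, h => absurd (cons.inj h).1.symm hab
  | _ + 1, 0, _, _, h => absurd (cons.inj h).1 hab
  | _ + 1, _ + 1, _, _, h =>
    (eq_of_replicate_append_cons_eq hab (cons.inj h).2).imp (congrArg (· + 1)) id

theorem not_replicate_prefix_replicate_append_cons (hab : a ≠ b) {i p : ℕ} (hip : i < p)
    (l : List α) : ¬ replicate p a <+: replicate i a ++ b :: l := by
  obtain ⟨k, rfl⟩ : ∃ k, p = i + (k + 1) := ⟨p - i - 1, by omega⟩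
  rw [replicate_add, prefix_append_right_inj, replicate_succ, cons_prefix_cons]
  exact fun h => hab h.1

theorem replicate_infix_replicate_append_cons_iff (hab : a ≠ b) {i p : ℕ} (hip : i < p)
    {l : List α} : replicate p a <:+: replicate i a ++ b :: l ↔ replicate p a <:+: l := by
  refine ⟨fun h => ?_, fun h => h.trans ((suffix_cons b l).isInfix.trans infix_append_right)⟩
  induction i with
  | zero =>
    exact (infix_cons_iff.1 h).resolve_left (not_replicate_prefix_replicate_append_cons hab hip l)
  | succ i ih =>
    rw [replicate_succ, cons_append, infix_cons_iff, ← cons_append, ← replicate_succ] at h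
    exact ih (by omega) (h.resolve_left (not_replicate_prefix_replicate_append_cons hab hip l))

theorem ofFn_getD_of_length_eq {n : ℕ} {l : List α} (h : l.length = n) (d : α) :
    ofFn (fun j : Fin n => l.getD j d) = l := by
  subst h
  simp

end List

theorem antitone_replicate_false_infix_ofFn (p t : ℕ) :
    Antitone fun w : Fin t → Bool => replicate p false <:+: ofFn w := by
  intro w w' hww' h
  rw [infix_iff_getElem?] at h ⊢
  obtain ⟨k, hk, h⟩ := h
  refine ⟨k, by simpa using hk, fun i hi => ?_⟩
  have hik : i + k < t := by simp only [length_replicate, length_ofFn] at hk hi; omega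
  have h' := h i hi
  simp only [length_ofFn, hik, getElem?_pos, List.getElem_ofFn, getElem_replicate,
    Option.some.injEq] at h' ⊢
  exact Bool.eq_false_of_le_false (h' ▸ hww' ⟨i + k, hik⟩)

def runFreeWords (p t : ℕ) : Finset (Fin t → Bool) :=
  univ.filter fun w => ¬ replicate p false <:+: ofFn w

theorem card_runFreeWords_of_lt {p t : ℕ} (htp : t < p) : #(runFreeWords p t) = 2 ^ t := by
  rw [runFreeWords, filter_true_of_mem, card_univ]
  · simp
  · intro w _ h
    have := h.length_le
    simp only [length_replicate, length_ofFn] at this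
    omega

theorem sum_card_runFreeWords_le {p t : ℕ} (hpt : p ≤ t) :
    ∑ i ∈ range p, #(runFreeWords p (t - 1 - i)) ≤ #(runFreeWords p t) := by
  have hlen {i : ℕ} (hi : i < p) (w : Fin (t - 1 - i) → Bool) :
      (replicate i false ++ true :: ofFn w).length = t := by
    simp only [length_append, length_replicate, length_cons, length_ofFn]; omega
  rw [← card_sigma]
  refine card_le_card_of_injOn (fun x j => (replicate x.1 false ++ true :: ofFn x.2).getD j false)
    (fun ⟨i, w⟩ hx => ?_) (fun ⟨i, w⟩ hx ⟨j, w'⟩ hy hxy => ?_)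
  · simp only [coe_sigma, Set.mem_sigma_iff, coe_range, Set.mem_Iio, runFreeWords, coe_filter,
      Set.mem_ofPred_eq, mem_univ, true_and] at hx ⊢
    rw [ofFn_getD_of_length_eq (hlen hx.1 w),
      replicate_infix_replicate_append_cons_iff Bool.false_ne_true hx.1]
    exact hx.2
  · simp only [coe_sigma, Set.mem_sigma_iff, coe_range, Set.mem_Iio] at hx hy
    have := congrArg ofFn hxy
    simp only at this
    rw [ofFn_getD_of_length_eq (hlen hx.1 w), ofFn_getD_of_length_eq (hlen hy.1 w')] at this
    obtain ⟨rfl, hww'⟩ := eq_of_replicate_append_cons_eq Bool.false_ne_true this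
    rw [ofFn_injective hww']

theorem qbonacci_succ_le_card_runFreeWords (p t : ℕ) :
    qbonacci p (t + 1) ≤ #(runFreeWords p t) := by
  induction t using Nat.strong_induction_on with
  | _ t ih =>
    rw [qbonacci]
    split_ifs with htp
    · rw [card_runFreeWords_of_lt (by omega)]
    · refine (Finset.sum_le_sum fun i hi => ?_).trans (sum_card_runFreeWords_le (by omega))
      have hi := Finset.mem_range.1 hi
      rw [show t - i = t - 1 - i + 1 by omega]
      exact ih _ (by omega)

theorem monotone_card_filter_eq_true {ι : Type*} [Fintype ι] :
    Monotone fun x : ι → Bool => #(univ.filter fun k => x k = true) := fun x y hxy =>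
  card_le_card fun k => by simpa using fun hk => Bool.eq_true_of_true_le (hk ▸ hxy k)

theorem card_filter_not_add_card_filter {ι : Type*} [Fintype ι] (x : ι → Bool) :
    #(univ.filter fun k => (!x k) = true) + #(univ.filter fun k => x k = true) = Fintype.card ι := by
  simpa [add_comm] using card_filter_add_card_filter_not (s := univ) fun k => x k = true

theorem two_mul_card_majority {n : ℕ} (hn : Odd n) :
    2 * #(univ.filter fun x : Fin n → Bool => n < 2 * #(univ.filter fun k => x k = true)) = 2 ^ n := by
  set M := univ.filter fun x : Fin n → Bool => n < 2 * #(univ.filter fun k => x k = true)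
  have hcompl : #M = #(univ.filter fun x : Fin n → Bool => ¬ x ∈ M) := by
    refine card_equiv (Equiv.piCongrRight fun _ => Equiv.boolNot) fun x => ?_
    have := card_filter_not_add_card_filter x
    obtain ⟨m, rfl⟩ := hn
    simp only [Bool.not_eq_eq_eq_not, Bool.not_true, Fintype.card_fin, Finset.mem_filter,
      mem_univ, true_and, not_lt, Equiv.boolNot, Equiv.piCongrRight_apply,
      Function.Involutive.coe_toPerm, Pi.map_apply, M] at this ⊢
    omega
  have htotal : #M + #(univ.filter fun x : Fin n → Bool => ¬ x ∈ M) = 2 ^ n := by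
    simpa using card_filter_add_card_filter_not (s := univ) fun x : Fin n → Bool => x ∈ M
  omega

theorem stmt16_general (t n p : ℕ) (hn : Odd n) :
    (qbonacci p (t + 1) : ℝ) ^ n / 2 ^ (t * n + t)
      ≤ ((Finset.univ.filter (fun Y : Fin t → Fin n → Bool =>
            (∀ k, ¬ List.replicate p false <:+: List.ofFn (fun s => Y s k)) ∧
            (∀ s, n < 2 * (Finset.univ.filter (fun k => Y s k = true)).card))).card : ℝ)
          / 2 ^ (t * n) := by
  have harris := card_filter_mul_card_filter_le_of_monotone
    (P := fun Y : Fin t → Fin n → Bool => ∀ k, ¬ replicate p false <:+: ofFn fun s => Y s k)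
    (Q := fun Y : Fin t → Fin n → Bool => ∀ s, n < 2 * #(univ.filter fun k => Y s k = true))
    (fun Y Y' hY h k => mt (antitone_replicate_false_infix_ofFn p t fun s => hY s k) (h k))
    (fun Y Y' hY h s =>
      (h s).trans_le (Nat.mul_le_mul_left 2 (monotone_card_filter_eq_true (hY s))))
  rw [card_filter_forall_column fun w : Fin t → Bool => ¬ replicate p false <:+: ofFn w,
    card_filter_forall_apply fun x : Fin n → Bool => n < 2 * #(univ.filter fun k => x k = true)]
    at harris
  simp only [Fintype.card_fun, Fintype.card_fin, Fintype.card_bool] at harris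
  set M := #(univ.filter fun x : Fin n → Bool => n < 2 * #(univ.filter fun k => x k = true))
  set N := #(univ.filter fun Y : Fin t → Fin n → Bool =>
    (∀ k, ¬ replicate p false <:+: ofFn fun s => Y s k) ∧
      ∀ s, n < 2 * #(univ.filter fun k => Y s k = true))
  have hrows : 2 ^ t * M ^ t = 2 ^ (t * n) := by
    rw [← mul_pow, two_mul_card_majority hn, ← pow_mul, mul_comm]
  have key : qbonacci p (t + 1) ^ n * 2 ^ (t * n) ≤ N * 2 ^ (t * n + t) := calc
    _ = qbonacci p (t + 1) ^ n * M ^ t * 2 ^ t := by rw [← hrows]; ring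
    _ ≤ #(runFreeWords p t) ^ n * M ^ t * 2 ^ t := by
      gcongr; exact qbonacci_succ_le_card_runFreeWords p t
    _ ≤ (2 ^ n) ^ t * N * 2 ^ t := Nat.mul_le_mul_right _ harris
    _ = N * 2 ^ (t * n + t) := by ring
  rw [div_le_div_iff₀ (by positivity) (by positivity)]
  exact_mod_cast key

theorem stmt16 (t n p : ℕ) (hn : Odd n) (hp : 1 ≤ p) :
    (qbonacci p (t + 1) : ℝ) ^ n / 2 ^ (t * n + t)
      ≤ ((Finset.univ.filter (fun Y : Fin t → Fin n → Bool =>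
            (∀ k, ¬ List.replicate p false <:+: List.ofFn (fun s => Y s k)) ∧
            (∀ s, n < 2 * (Finset.univ.filter (fun k => Y s k = true)).card))).card : ℝ)
          / 2 ^ (t * n) :=
  stmt16_general t n p hn
end
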